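/- Suppose a ℤ-graded module A carries a product μ of degree |μ| and coproduct λ of degree |λ| such that μ is graded-commutative (μτ = (-1)^{|μ|} μ) and λ is graded-cocommutative (τλ = (-1)^{|λ|} λ), and the unital infinitesimal relation holds: λμ = (-1)^{|λ||μ|}[(1⊗μ)(λ⊗1) + (μ⊗1)(1⊗λ)] - (-1)^{|μ|}(μ⊗μ)(1⊗λη⊗1) for a unit η of μ. Then the unital anti-symmetry relation holds, i.e. (-1)^{|μ|(|λ|+1)}(1⊗μ)(τλ⊗1) + (-1)^{|λ|(|μ|+1)}(μτ⊗1)(1⊗λ) - (-1)^{|λ|+|μ|}(μτ⊗μ)(1⊗λη⊗1) = (-1)^{|λ||μ|}τ(1⊗μτ)(λ⊗1) - (-1)^{(|λ|+1)(|μ|+1)}τ(μ⊗1)(1⊗τλ) - (-1)^{|μ|}τ(μ⊗μτ)(1⊗λη⊗1). -/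

import Mathlib

open TensorProduct LinearMap
open scoped TensorProduct DirectSum

namespace GradedCoFrob

variable {R : Type} [CommRing R] {M : Type} [AddCommGroup M] [Module R M]

/-- The Koszul sign `(-1)^n` for `n : ℤ`. -/
def ksign (n : ℤ) : ℤ := (((-1 : ℤˣ) ^ n : ℤˣ) : ℤ)

variable (𝒜 : ℤ → Submodule R M) [DirectSum.Decomposition 𝒜]

/-- Build a linear map `M →ₗ N` out of its values on the homogeneous pieces,
bundled linearly in the family of values. -/
noncomputable def fromPiecesHom {N : Type} [AddCommGroup N] [Module R N] :
    (∀ i : ℤ, 𝒜 i →ₗ[R] N) →ₗ[R] (M →ₗ[R] N) :=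
  (LinearMap.lcomp R N (DirectSum.decomposeLinearEquiv 𝒜).toLinearMap).comp
    (DFinsupp.lsum R (M := fun i => 𝒜 i) (N := N)).toLinearMap

/-- Build a linear map `M →ₗ N` out of its values on the homogeneous pieces. -/
noncomputable def fromPieces {N : Type} [AddCommGroup N] [Module R N]
    (f : ∀ i : ℤ, 𝒜 i →ₗ[R] N) : M →ₗ[R] N :=
  fromPiecesHom 𝒜 f

/-- Build a bilinear map `M →ₗ M →ₗ N` out of its values on pairs of homogeneous pieces. -/
noncomputable def fromPieces₂ {N : Type} [AddCommGroup N] [Module R N]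
    (f : ∀ i j : ℤ, 𝒜 i →ₗ[R] 𝒜 j →ₗ[R] N) : M →ₗ[R] M →ₗ[R] N :=
  fromPieces 𝒜 (fun i => (fromPiecesHom 𝒜).comp (LinearMap.pi (fun j => f i j)))

/-- The operator multiplying the degree `i` component by the Koszul sign `(-1)^(d*i)`. -/
noncomputable def signAction (d : ℤ) : M →ₗ[R] M :=
  fromPieces 𝒜 (fun i => ksign (d * i) • (𝒜 i).subtype)

/-- The Koszul twist `τ(a ⊗ b) = (-1)^{|a||b|} b ⊗ a`. -/
noncomputable def twist : M ⊗[R] M →ₗ[R] M ⊗[R] M :=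
  TensorProduct.lift (fromPieces₂ 𝒜 (fun i j =>
    ksign (i * j) • ((((TensorProduct.mk R M M).flip).comp (𝒜 i).subtype).compl₂
      (𝒜 j).subtype)))

/-- Left contraction `(f ⊗ 1)(x ⊗ y) = f(x) • y` (no Koszul sign since `1` has degree `0`). -/
noncomputable def contrL {N : Type} [AddCommGroup N] [Module R N]
    (f : N →ₗ[R] R) : N ⊗[R] M →ₗ[R] M :=
  TensorProduct.lift ((LinearMap.lsmul R M).comp f)

/-- Right contraction with Koszul sign:
`(1 ⊗ f)(x ⊗ y) = (-1)^{d|x|} f(y) • x` where `d` is the degree of `f`. -/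
noncomputable def contrR {N : Type} [AddCommGroup N] [Module R N]
    (f : N →ₗ[R] R) (d : ℤ) : M ⊗[R] N →ₗ[R] M :=
  TensorProduct.lift ((((LinearMap.lsmul R M).comp f).flip).comp (signAction 𝒜 d))

/-- Koszul-signed evaluation of a pair of functionals on a tensor:
`(x ⊗ y) ↦ f((-1)^{d₁|x|} x) * g((-1)^{d₂|y|} y)`. -/
noncomputable def ev2 (f g : M →ₗ[R] R) (d₁ d₂ : ℤ) : M ⊗[R] M →ₗ[R] R :=
  TensorProduct.lift (((LinearMap.mul R R).comp (f.comp (signAction 𝒜 d₁))).compl₂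
    (g.comp (signAction 𝒜 d₂)))

/-- The map `c⃗ : A^∨ → A`, `f ↦ (-1)^{|f||c|}(f ⊗ 1)c`, implemented by putting the sign
`(-1)^{dc |x|}` on the first tensor factor of the copairing `c` (of degree `dc`). -/
noncomputable def cvec (c : M ⊗[R] M) (dc : ℤ) : (M →ₗ[R] R) →ₗ[R] M :=
  (LinearMap.applyₗ ((LinearMap.rTensor M (signAction 𝒜 dc)) c)).comp
    ((TensorProduct.lift.equiv (RingHom.id R) M M M).toLinearMap.comp
      (LinearMap.llcomp R M R (M →ₗ[R] M) (LinearMap.lsmul R M)))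

/-- The operation `(1 ⊗ c ⊗ 1) : A ⊗ A → (A ⊗ A) ⊗ (A ⊗ A)`,
`a ⊗ b ↦ (-1)^{|c||a|} (a ⊗ c₁) ⊗ (c₂ ⊗ b)` for a copairing `c` of degree `dc`. -/
noncomputable def midIns (c : M ⊗[R] M) (dc : ℤ) :
    M ⊗[R] M →ₗ[R] (M ⊗[R] M) ⊗[R] (M ⊗[R] M) :=
  (TensorProduct.assoc R (M ⊗[R] M) M M).toLinearMap.comp
    (LinearMap.rTensor M
      (((TensorProduct.assoc R M M M).symm.toLinearMap).comp
        (((TensorProduct.mk R M (M ⊗[R] M)).flip c).comp (signAction 𝒜 dc))))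

/-- The Koszul-signed cyclic permutation `σ(a⊗b⊗c) = (-1)^{(|a|+|b|)|c|} c⊗a⊗b`. -/
noncomputable def cyc : (M ⊗[R] M) ⊗[R] M →ₗ[R] (M ⊗[R] M) ⊗[R] M :=
  (LinearMap.rTensor M (twist 𝒜)).comp
    ((TensorProduct.assoc R M M M).symm.toLinearMap.comp
      ((LinearMap.lTensor M (twist 𝒜)).comp (TensorProduct.assoc R M M M).toLinearMap))

/-- The submodule `A_i ⊗ A_j ⊆ A ⊗ A`. -/
noncomputable def tpiece (i j : ℤ) : Submodule R (M ⊗[R] M) :=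
  LinearMap.range (TensorProduct.map (𝒜 i).subtype (𝒜 j).subtype)

/-- The degree `k` part `⨁_{i+j=k} A_i ⊗ A_j` of `A ⊗ A`. -/
noncomputable def tgrade (k : ℤ) : Submodule R (M ⊗[R] M) :=
  ⨆ i : ℤ, tpiece 𝒜 i (k - i)

/-- A product is homogeneous of degree `d`. -/
def IsHomogProd (d : ℤ) (mu : M ⊗[R] M →ₗ[R] M) : Prop :=
  ∀ i j : ℤ, ∀ x ∈ 𝒜 i, ∀ y ∈ 𝒜 j, mu (x ⊗ₜ[R] y) ∈ 𝒜 (i + j + d)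

/-- A coproduct is homogeneous of degree `d`. -/
def IsHomogCoprod (d : ℤ) (lam : M →ₗ[R] M ⊗[R] M) : Prop :=
  ∀ k : ℤ, ∀ x ∈ 𝒜 k, lam x ∈ tgrade 𝒜 (k + d)

/-- A scalar-valued functional is homogeneous of degree `d`. -/
def IsHomogFun (d : ℤ) (f : M →ₗ[R] R) : Prop :=
  ∀ i : ℤ, i ≠ -d → ∀ x ∈ 𝒜 i, f x = 0

/-- A pairing is homogeneous of degree `d`. -/
def IsHomogPairing (d : ℤ) (p : M ⊗[R] M →ₗ[R] R) : Prop :=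
  ∀ i j : ℤ, i + j ≠ -d → ∀ x ∈ 𝒜 i, ∀ y ∈ 𝒜 j, p (x ⊗ₜ[R] y) = 0

end GradedCoFrob
namespace GradedCoFrob

/-- A unital coFrobenius bialgebra structure on a ℤ-graded module
(Definition `defi:coFrobenius-unital-bialgebra`), with all Koszul sign conventions explicit. -/
structure UnitalCoFrob (R : Type) [CommRing R] {M : Type} [AddCommGroup M] [Module R M]
    (𝒜 : ℤ → Submodule R M) [DirectSum.Decomposition 𝒜] where
  mu : M ⊗[R] M →ₗ[R] M
  lam : M →ₗ[R] M ⊗[R] M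
  unit : M
  dm : ℤ
  dl : ℤ
  mu_homog : IsHomogProd 𝒜 dm mu
  lam_homog : IsHomogCoprod 𝒜 dl lam
  unit_homog : unit ∈ 𝒜 (-dm)
  /-- graded associativity `μ(μ⊗1) = (-1)^{|μ|} μ(1⊗μ)` -/
  mu_assoc : mu.comp (LinearMap.rTensor M mu) =
    ksign dm • (mu.comp ((TensorProduct.map (signAction 𝒜 dm) mu).comp
      (TensorProduct.assoc R M M M).toLinearMap))
  /-- `(-1)^{|μ|} μ(η ⊗ 1) = 1` -/
  unit_left : ksign dm • (mu.comp ((TensorProduct.mk R M M) unit)) = LinearMap.id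
  /-- `μ(1 ⊗ η) = 1` -/
  unit_right : mu.comp (((TensorProduct.mk R M M).flip unit).comp (signAction 𝒜 (-dm))) =
    LinearMap.id
  cop : M ⊗[R] M
  /-- the copairing `c = (-1)^{|λ||μ|+|μ|} λη` -/
  cop_def : cop = ksign (dl * dm + dm) • lam unit
  /-- `λ = (1⊗μ)(c⊗1)` -/
  cofrob_left : lam = (TensorProduct.map (signAction 𝒜 dm) mu).comp
    ((TensorProduct.assoc R M M M).toLinearMap.comp (TensorProduct.mk R (M ⊗[R] M) M cop))
  /-- `λ = (-1)^{|μ|}(μ⊗1)(1⊗c)` -/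
  cofrob_right : lam = ksign dm • ((LinearMap.rTensor M mu).comp
    ((TensorProduct.assoc R M M M).symm.toLinearMap.comp
      (((TensorProduct.mk R M (M ⊗[R] M)).flip cop).comp (signAction 𝒜 (dl - dm)))))
  /-- `τc = (-1)^{|λ|} c` -/
  cop_symm : twist 𝒜 cop = ksign dl • cop

/-- A biunital coFrobenius bialgebra structure on a ℤ-graded module
(Definition `defi:biunital-coFrobenius-bialgebra`), with all Koszul sign conventions explicit. -/
structure BiunitalCoFrob (R : Type) [CommRing R] {M : Type} [AddCommGroup M] [Module R M]
    (𝒜 : ℤ → Submodule R M) [DirectSum.Decomposition 𝒜] where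
  mu : M ⊗[R] M →ₗ[R] M
  lam : M →ₗ[R] M ⊗[R] M
  unit : M
  counit : M →ₗ[R] R
  dm : ℤ
  dl : ℤ
  mu_homog : IsHomogProd 𝒜 dm mu
  lam_homog : IsHomogCoprod 𝒜 dl lam
  unit_homog : unit ∈ 𝒜 (-dm)
  counit_homog : IsHomogFun 𝒜 (-dl) counit
  mu_assoc : mu.comp (LinearMap.rTensor M mu) =
    ksign dm • (mu.comp ((TensorProduct.map (signAction 𝒜 dm) mu).comp
      (TensorProduct.assoc R M M M).toLinearMap))
  /-- graded coassociativity `(λ⊗1)λ = (-1)^{|λ|}(1⊗λ)λ` -/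
  lam_coassoc : (LinearMap.rTensor M lam).comp lam =
    ksign dl • ((TensorProduct.assoc R M M M).symm.toLinearMap.comp
      ((TensorProduct.map (signAction 𝒜 dl) lam).comp lam))
  unit_left : ksign dm • (mu.comp ((TensorProduct.mk R M M) unit)) = LinearMap.id
  unit_right : mu.comp (((TensorProduct.mk R M M).flip unit).comp (signAction 𝒜 (-dm))) =
    LinearMap.id
  /-- `(ε⊗1)λ = 1` -/
  counit_left : (contrL counit).comp lam = LinearMap.id
  /-- `(-1)^{|λ|}(1⊗ε)λ = 1` -/
  counit_right : ksign dl • ((contrR 𝒜 counit (-dl)).comp lam) = LinearMap.id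
  cop : M ⊗[R] M
  cop_def : cop = ksign (dl * dm + dm) • lam unit
  pr : M ⊗[R] M →ₗ[R] R
  /-- the pairing `p = (-1)^{|λ|} εμ` -/
  pr_def : pr = ksign dl • (counit.comp mu)
  cofrob_left : lam = (TensorProduct.map (signAction 𝒜 dm) mu).comp
    ((TensorProduct.assoc R M M M).toLinearMap.comp (TensorProduct.mk R (M ⊗[R] M) M cop))
  cofrob_right : lam = ksign dm • ((LinearMap.rTensor M mu).comp
    ((TensorProduct.assoc R M M M).symm.toLinearMap.comp
      (((TensorProduct.mk R M (M ⊗[R] M)).flip cop).comp (signAction 𝒜 (dl - dm)))))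
  /-- `μ = (-1)^{|μ||λ|+|λ|}(p⊗1)(1⊗λ)` -/
  cofrob_pr_left : mu = ksign (dm * dl + dl) • ((contrL pr).comp
    ((TensorProduct.assoc R M M M).symm.toLinearMap.comp
      (TensorProduct.map (signAction 𝒜 dl) lam)))
  /-- `μ = (-1)^{|μ||λ|}(1⊗p)(λ⊗1)` -/
  cofrob_pr_right : mu = ksign (dm * dl) • ((contrR 𝒜 pr (dm - dl)).comp
    ((TensorProduct.assoc R M M M).toLinearMap.comp (LinearMap.rTensor M lam)))
  cop_symm : twist 𝒜 cop = ksign dl • cop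
  /-- `pτ = (-1)^{|μ|} p` -/
  pr_symm : pr.comp (twist 𝒜) = ksign dm • pr

end GradedCoFrob

/-!
Substituting `μτ = (-1)^{|μ|} μ` and `τλ = (-1)^{|λ|} λ`, every term of the left-hand side
becomes `(-1)^{|λ|+|μ|}` times the corresponding term of the right-hand side of the
infinitesimal relation, so the left-hand side equals `(-1)^{|λ|+|μ|} λμ`. Likewise the
right-hand side becomes `(-1)^{|μ|} τ` applied to that relation, i.e. `(-1)^{|μ|} τλμ`, and
cocommutativity turns this into `(-1)^{|λ|+|μ|} λμ` as well.
-/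

namespace GradedCoFrob

theorem ksign_add (a b : ℤ) : ksign (a + b) = ksign a * ksign b := by
  simp [ksign, zpow_add]

theorem ksign_add_two_mul (a k : ℤ) : ksign (a + 2 * k) = ksign a := by
  simp [ksign, zpow_add, zpow_mul]

theorem ksign_add_one (a : ℤ) : ksign (a + 1) = -ksign a := by
  simp [ksign, zpow_add]

section ZSMul

variable {R M N P Q : Type} [CommRing R] [AddCommGroup M] [Module R M]
  [AddCommGroup N] [Module R N] [AddCommGroup P] [Module R P] [AddCommGroup Q] [Module R Q]

theorem map_zsmul_left (c : ℤ) (f : M →ₗ[R] N) (g : P →ₗ[R] Q) :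
    TensorProduct.map (c • f) g = c • TensorProduct.map f g :=
  map_zsmul ((TensorProduct.mapBilinear (RingHom.id R) M P N Q).flip g) c f

theorem map_zsmul_right (c : ℤ) (f : M →ₗ[R] N) (g : P →ₗ[R] Q) :
    TensorProduct.map f (c • g) = c • TensorProduct.map f g :=
  map_zsmul (TensorProduct.mapBilinear (RingHom.id R) M P N Q f) c g

theorem rTensor_zsmul (c : ℤ) (f : M →ₗ[R] N) : (c • f).rTensor P = c • f.rTensor P :=
  map_zsmul (LinearMap.rTensorHom P) c f

end ZSMul

theorem comm_cocomm_implies_antisymmetry_general {R : Type} [CommRing R] {M : Type}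
    [AddCommGroup M] [Module R M] (𝒜 : ℤ → Submodule R M) [DirectSum.Decomposition 𝒜]
    (mu : M ⊗[R] M →ₗ[R] M) (lam : M →ₗ[R] M ⊗[R] M) (eta : M) (dm dl : ℤ)
    -- μ commutative: μτ = (-1)^{|μ|}μ
    (hcomm : mu.comp (twist 𝒜) = ksign dm • mu)
    -- λ cocommutative: τλ = (-1)^{|λ|}λ
    (hcocomm : (twist 𝒜).comp lam = ksign dl • lam)
    -- unital infinitesimal relation
    (hinf : lam.comp mu =
      ksign (dl * dm) •
        ((TensorProduct.map (signAction 𝒜 dm) mu).comp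
          ((TensorProduct.assoc R M M M).toLinearMap.comp (LinearMap.rTensor M lam))
        + (LinearMap.rTensor M mu).comp
          ((TensorProduct.assoc R M M M).symm.toLinearMap.comp
            (TensorProduct.map (signAction 𝒜 dl) lam)))
      - ksign dm •
        ((TensorProduct.map
            (mu.comp (TensorProduct.map (signAction 𝒜 dm) (signAction 𝒜 dm))) mu).comp
          (midIns 𝒜 (lam eta) (dl - dm)))) :
    -- unital anti-symmetry
    ksign (dm * (dl + 1)) •
      ((TensorProduct.map (signAction 𝒜 dm) mu).comp
        ((TensorProduct.assoc R M M M).toLinearMap.comp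
          (LinearMap.rTensor M ((twist 𝒜).comp lam))))
    + ksign (dl * (dm + 1)) •
      ((LinearMap.rTensor M (mu.comp (twist 𝒜))).comp
        ((TensorProduct.assoc R M M M).symm.toLinearMap.comp
          (TensorProduct.map (signAction 𝒜 dl) lam)))
    - ksign (dl + dm) •
      ((TensorProduct.map
          ((mu.comp (twist 𝒜)).comp
            (TensorProduct.map (signAction 𝒜 dm) (signAction 𝒜 dm))) mu).comp
        (midIns 𝒜 (lam eta) (dl - dm)))
    = ksign (dl * dm) •
        ((twist 𝒜).comp ((TensorProduct.map (signAction 𝒜 dm) (mu.comp (twist 𝒜))).comp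
          ((TensorProduct.assoc R M M M).toLinearMap.comp (LinearMap.rTensor M lam))))
      - ksign ((dl + 1) * (dm + 1)) •
        ((twist 𝒜).comp ((LinearMap.rTensor M mu).comp
          ((TensorProduct.assoc R M M M).symm.toLinearMap.comp
            (TensorProduct.map (signAction 𝒜 dl) ((twist 𝒜).comp lam)))))
      - ksign dm •
        ((twist 𝒜).comp ((TensorProduct.map
            (mu.comp (TensorProduct.map (signAction 𝒜 dm) (signAction 𝒜 dm)))
            (mu.comp (twist 𝒜))).comp
          (midIns 𝒜 (lam eta) (dl - dm)))) := by
  have htwist_lam_mu : (twist 𝒜).comp (lam.comp mu) = ksign dl • lam.comp mu := by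
    rw [← LinearMap.comp_assoc, hcocomm, LinearMap.smul_comp]
  rw [hcomm, hcocomm]
  simp only [map_zsmul_left, map_zsmul_right, rTensor_zsmul, LinearMap.comp_smul,
    LinearMap.smul_comp, smul_smul, ← ksign_add]
  calc _ = ksign (dl + dm) • lam.comp mu := by
        rw [hinf]
        simp only [smul_add, smul_sub, smul_smul, ← ksign_add]
        match_scalars <;> ring_nf
    _ = ksign dm • (twist 𝒜).comp (lam.comp mu) := by
        rw [htwist_lam_mu, smul_smul, ← ksign_add, add_comm dm dl]
    _ = _ := by
        rw [hinf]
        simp only [LinearMap.comp_sub, LinearMap.comp_add, LinearMap.comp_smul, smul_sub,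
          smul_add, smul_smul, ← ksign_add]
        match_scalars
        · ring_nf
        · rw [show (dl + 1) * (dm + 1) + dl = dm + dl * dm + 2 * dl + 1 by ring,
            ksign_add_one, ksign_add_two_mul]
          ring
        · rfl

/-- If a graded module carries a graded-commutative product `μ` with unit `η`
and a graded-cocommutative coproduct `λ` satisfying the unital infinitesimal relation
`λμ = (-1)^{|λ||μ|}[(1⊗μ)(λ⊗1) + (μ⊗1)(1⊗λ)] - (-1)^{|μ|}(μ⊗μ)(1⊗λη⊗1)`,
then the unital anti-symmetry relation holds. -/
theorem comm_cocomm_implies_antisymmetry {R : Type} [CommRing R] {M : Type}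
    [AddCommGroup M] [Module R M] (𝒜 : ℤ → Submodule R M) [DirectSum.Decomposition 𝒜]
    (mu : M ⊗[R] M →ₗ[R] M) (lam : M →ₗ[R] M ⊗[R] M) (eta : M) (dm dl : ℤ)
    (hmu : IsHomogProd 𝒜 dm mu) (hlam : IsHomogCoprod 𝒜 dl lam)
    (heta : eta ∈ 𝒜 (-dm))
    -- η is a unit: (-1)^{|μ|}μ(η⊗1) = 1 = μ(1⊗η)
    (hunitL : ksign dm • (mu.comp ((TensorProduct.mk R M M) eta)) = LinearMap.id)
    (hunitR : mu.comp (((TensorProduct.mk R M M).flip eta).comp (signAction 𝒜 (-dm))) =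
      LinearMap.id)
    -- μ commutative: μτ = (-1)^{|μ|}μ
    (hcomm : mu.comp (twist 𝒜) = ksign dm • mu)
    -- λ cocommutative: τλ = (-1)^{|λ|}λ
    (hcocomm : (twist 𝒜).comp lam = ksign dl • lam)
    -- unital infinitesimal relation
    (hinf : lam.comp mu =
      ksign (dl * dm) •
        ((TensorProduct.map (signAction 𝒜 dm) mu).comp
          ((TensorProduct.assoc R M M M).toLinearMap.comp (LinearMap.rTensor M lam))
        + (LinearMap.rTensor M mu).comp
          ((TensorProduct.assoc R M M M).symm.toLinearMap.comp
            (TensorProduct.map (signAction 𝒜 dl) lam)))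
      - ksign dm •
        ((TensorProduct.map
            (mu.comp (TensorProduct.map (signAction 𝒜 dm) (signAction 𝒜 dm))) mu).comp
          (midIns 𝒜 (lam eta) (dl - dm)))) :
    -- unital anti-symmetry
    ksign (dm * (dl + 1)) •
      ((TensorProduct.map (signAction 𝒜 dm) mu).comp
        ((TensorProduct.assoc R M M M).toLinearMap.comp
          (LinearMap.rTensor M ((twist 𝒜).comp lam))))
    + ksign (dl * (dm + 1)) •
      ((LinearMap.rTensor M (mu.comp (twist 𝒜))).comp
        ((TensorProduct.assoc R M M M).symm.toLinearMap.comp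
          (TensorProduct.map (signAction 𝒜 dl) lam)))
    - ksign (dl + dm) •
      ((TensorProduct.map
          ((mu.comp (twist 𝒜)).comp
            (TensorProduct.map (signAction 𝒜 dm) (signAction 𝒜 dm))) mu).comp
        (midIns 𝒜 (lam eta) (dl - dm)))
    = ksign (dl * dm) •
        ((twist 𝒜).comp ((TensorProduct.map (signAction 𝒜 dm) (mu.comp (twist 𝒜))).comp
          ((TensorProduct.assoc R M M M).toLinearMap.comp (LinearMap.rTensor M lam))))
      - ksign ((dl + 1) * (dm + 1)) •
        ((twist 𝒜).comp ((LinearMap.rTensor M mu).comp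
          ((TensorProduct.assoc R M M M).symm.toLinearMap.comp
            (TensorProduct.map (signAction 𝒜 dl) ((twist 𝒜).comp lam)))))
      - ksign dm •
        ((twist 𝒜).comp ((TensorProduct.map
            (mu.comp (TensorProduct.map (signAction 𝒜 dm) (signAction 𝒜 dm)))
            (mu.comp (twist 𝒜))).comp
          (midIns 𝒜 (lam eta) (dl - dm)))) :=
  comm_cocomm_implies_antisymmetry_general 𝒜 mu lam eta dm dl hcomm hcocomm hinf

end GradedCoFrob
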